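/- For every n ≥ 1, V^M_{c₁}(μ_3, ν_{3,n}) = 1, where c₁(x,y) = ‖x−y‖ (Euclidean norm), μ_3 = (1/3)∑_{i=1}^3 δ_{(i,0)} and ν_{3,n} = μ_3 P_{π/(2n)}. -/

import Mathlib

open MeasureTheory Filter
set_option maxHeartbeats 1000000
open scoped BoundedContinuousFunction ENNReal Topology

noncomputable section

/-- The plane with the Euclidean norm. -/
abbrev R2 : Type := EuclideanSpace ℝ (Fin 2)

/-- The point `(a, b)` of the Euclidean plane. -/
def pt (a b : ℝ) : R2 := (WithLp.equiv 2 (Fin 2 → ℝ)).symm ![a, b]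

/-- The unit vector at angle `θ`. -/
def dir (θ : ℝ) : R2 := pt (Real.cos θ) (Real.sin θ)

/-- The one-step kernel `P_θ` of the simple random walk along the line of angle `θ`. -/
def Pker (θ : ℝ) (x : R2) : Measure R2 :=
  (2 : ℝ≥0∞)⁻¹ • (Measure.dirac (x + dir θ) + Measure.dirac (x - dir θ))

/-- The measure `μ_m = (1/m) ∑_{i=1}^m δ_{(i,0)}`. -/
def muM (m : ℕ) : Measure R2 :=
  (m : ℝ≥0∞)⁻¹ • ∑ i ∈ Finset.Icc 1 m, Measure.dirac (pt i 0)

/-- The coupling `μ(Id, P)` of `μ` with conditional law `P(x,·)` given `x`. -/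
def couple (μ : Measure R2) (P : R2 → Measure R2) : Measure (R2 × R2) :=
  μ.bind (fun x => (P x).map (fun y => (x, y)))

/-- `π` is a coupling of `μ` and `ν`. -/
def IsCoupling {E F : Type*} [MeasurableSpace E] [MeasurableSpace F]
    (μ : Measure E) (ν : Measure F) (π : Measure (E × F)) : Prop :=
  IsProbabilityMeasure π ∧ π.map Prod.fst = μ ∧ π.map Prod.snd = ν

/-- `π` is a martingale coupling of `μ` and `ν`: a coupling such that
`∫ φ(x)(y - x) dπ(x,y) = 0` for every bounded continuous `φ`. -/
def IsMartCoupling {E : Type*} [MeasurableSpace E] [NormedAddCommGroup E] [NormedSpace ℝ E]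
    (μ ν : Measure E) (π : Measure (E × E)) : Prop :=
  IsCoupling μ ν π ∧ ∀ φ : E →ᵇ ℝ, ∫ p, φ p.1 • (p.2 - p.1) ∂π = 0

/-- The 1-Wasserstein distance: infimum of `∫ ‖x - y‖ dπ` over couplings. -/
def W1 {E : Type*} [MeasurableSpace E] [NormedAddCommGroup E] (μ ν : Measure E) : ℝ :=
  sInf {r | ∃ π : Measure (E × E), IsCoupling μ ν π ∧ ∫ p, ‖p.1 - p.2‖ ∂π = r}

/-- The value `V^M_c(μ,ν)` of the martingale optimal transport problem. -/
def MOTval {E : Type*} [MeasurableSpace E] [NormedAddCommGroup E] [NormedSpace ℝ E]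
    (c : E → E → ℝ) (μ ν : Measure E) : ℝ :=
  sInf {r | ∃ π : Measure (E × E), IsMartCoupling μ ν π ∧ ∫ p, c p.1 p.2 ∂π = r}

/-- Convex order: `∫ φ dμ ≤ ∫ φ dν` for every integrable convex `φ`. -/
def ConvexOrder {E : Type*} [MeasurableSpace E] [NormedAddCommGroup E] [NormedSpace ℝ E]
    (μ ν : Measure E) : Prop :=
  ∀ φ : E → ℝ, ConvexOn ℝ Set.univ φ → Integrable φ ν → Integrable φ μ →
    ∫ x, φ x ∂μ ≤ ∫ x, φ x ∂ν

lemma pt_apply0 (a b : ℝ) : pt a b 0 = a := rfl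
lemma pt_apply1 (a b : ℝ) : pt a b 1 = b := rfl
lemma pt_add (a b a' b' : ℝ) : pt a b + pt a' b' = pt (a+a') (b+b') := by
  ext i; fin_cases i <;> rfl
lemma pt_sub (a b a' b' : ℝ) : pt a b - pt a' b' = pt (a-a') (b-b') := by
  ext i; fin_cases i <;> rfl
lemma pt_eta (x : R2) : pt (x 0) (x 1) = x := by
  ext i; fin_cases i <;> rfl
lemma norm_pt (a b : ℝ) : ‖pt a b‖ = Real.sqrt (a^2 + b^2) := by
  rw [EuclideanSpace.norm_eq, Fin.sum_univ_two]
  simp [pt_apply0, pt_apply1, Real.norm_eq_abs, sq_abs]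
lemma pt_inj {a b a' b' : ℝ} (h : pt a b = pt a' b') : a = a' ∧ b = b' := by
  constructor
  · have := congrArg (fun z : R2 => z 0) h; simpa [pt_apply0] using this
  · have := congrArg (fun z : R2 => z 1) h; simpa [pt_apply1] using this

lemma integrable_dirac {α E : Type*} [MeasurableSpace α] [NormedAddCommGroup E]
    {f : α → E} (hf : StronglyMeasurable f) (a : α) : Integrable f (Measure.dirac a) := by
  refine ⟨hf.aestronglyMeasurable, ?_⟩
  rw [HasFiniteIntegral, lintegral_dirac' a hf.enorm]
  exact enorm_lt_top

lemma measurable_Pker (θ : ℝ) : Measurable (Pker θ) := by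
  apply Measure.measurable_of_measurable_coe
  intro s hs
  simp only [Pker, Measure.smul_apply, Measure.add_apply, Measure.dirac_apply' _ hs,
    smul_eq_mul]
  exact (((measurable_const.indicator hs).comp (measurable_id.add_const (dir θ))).add
    ((measurable_const.indicator hs).comp (measurable_id.sub_const (dir θ)))).const_mul _

lemma mu3_eq : muM 3 = (3:ℝ≥0∞)⁻¹ •
    (Measure.dirac (pt 1 0) + Measure.dirac (pt 2 0) + Measure.dirac (pt 3 0)) := by
  rw [muM, show Finset.Icc 1 3 = {1,2,3} from rfl]
  simp [Finset.sum_insert, add_assoc]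

lemma h63 : (6:ℝ≥0∞)⁻¹ = 3⁻¹ * 2⁻¹ := by
  rw [← ENNReal.mul_inv (Or.inl (by norm_num)) (Or.inl (by norm_num))]; norm_num

lemma nu3_eq (θ : ℝ) : (muM 3).bind (Pker θ) = (6:ℝ≥0∞)⁻¹ •
    (Measure.dirac (pt 1 0 + dir θ) + Measure.dirac (pt 1 0 - dir θ) +
     Measure.dirac (pt 2 0 + dir θ) + Measure.dirac (pt 2 0 - dir θ) +
     Measure.dirac (pt 3 0 + dir θ) + Measure.dirac (pt 3 0 - dir θ)) := by
  ext s hs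
  have hm : Measurable fun x : R2 => (Pker θ x) s :=
    (Measure.measurable_coe hs).comp (measurable_Pker θ)
  rw [Measure.bind_apply hs (measurable_Pker θ).aemeasurable, mu3_eq, lintegral_smul_measure,
    lintegral_add_measure, lintegral_add_measure,
    lintegral_dirac' _ hm, lintegral_dirac' _ hm, lintegral_dirac' _ hm]
  simp only [Pker, Measure.smul_apply, Measure.add_apply, smul_eq_mul, h63]
  ring


lemma integral_three {α E : Type*} [MeasurableSpace α]
    [NormedAddCommGroup E] [NormedSpace ℝ E] [CompleteSpace E]
    (f : α → E) (hf : StronglyMeasurable f) (p q r : α) :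
    ∫ x, f x ∂((3:ℝ≥0∞)⁻¹ • (Measure.dirac p + Measure.dirac q + Measure.dirac r))
      = (3:ℝ)⁻¹ • (f p + f q + f r) := by
  rw [integral_smul_measure,
    integral_add_measure ((integrable_dirac hf p).add_measure (integrable_dirac hf q))
      (integrable_dirac hf r),
    integral_add_measure (integrable_dirac hf p) (integrable_dirac hf q),
    integral_dirac' _ _ hf, integral_dirac' _ _ hf, integral_dirac' _ _ hf]
  simp [ENNReal.toReal_inv]

lemma integral_six {α E : Type*} [MeasurableSpace α]
    [NormedAddCommGroup E] [NormedSpace ℝ E] [CompleteSpace E]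
    (f : α → E) (hf : StronglyMeasurable f) (p₁ p₂ p₃ p₄ p₅ p₆ : α) :
    ∫ x, f x ∂((6:ℝ≥0∞)⁻¹ • (Measure.dirac p₁ + Measure.dirac p₂ + Measure.dirac p₃
      + Measure.dirac p₄ + Measure.dirac p₅ + Measure.dirac p₆))
      = (6:ℝ)⁻¹ • (f p₁ + f p₂ + f p₃ + f p₄ + f p₅ + f p₆) := by
  have I : ∀ (a : α), Integrable f (Measure.dirac a) := integrable_dirac hf
  rw [integral_smul_measure,
    integral_add_measure (((((I p₁).add_measure (I p₂)).add_measure (I p₃)).add_measure (I p₄)).add_measure (I p₅)) (I p₆),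
    integral_add_measure ((((I p₁).add_measure (I p₂)).add_measure (I p₃)).add_measure (I p₄)) (I p₅),
    integral_add_measure (((I p₁).add_measure (I p₂)).add_measure (I p₃)) (I p₄),
    integral_add_measure ((I p₁).add_measure (I p₂)) (I p₃),
    integral_add_measure (I p₁) (I p₂),
    integral_dirac' _ _ hf, integral_dirac' _ _ hf, integral_dirac' _ _ hf,
    integral_dirac' _ _ hf, integral_dirac' _ _ hf, integral_dirac' _ _ hf]
  simp [ENNReal.toReal_inv]

lemma pt_ne_fst {a b a' b' : ℝ} (h : a ≠ a') : pt a b ≠ pt a' b' := fun he => h (pt_inj he).1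
lemma pt_ne_snd {a b a' b' : ℝ} (h : b ≠ b') : pt a b ≠ pt a' b' := fun he => h (pt_inj he).2

def ψ (u : ℝ) : ℝ := max (-1) (min 1 (2 - u))
def NN (c : ℝ) : ℝ := Real.sqrt (2 - 2*c)
def PP (c : ℝ) : ℝ := 6 - 2 * NN c
def QQ (c s : ℝ) : ℝ := (2 - PP c * c) / s

open Classical in
def fv (c s : ℝ) : R2 → ℝ := fun y =>
  (NN c - 3) * ({pt 1 0} : Set R2).indicator 1 y
  + (NN c - 3) * ({pt 3 0} : Set R2).indicator 1 y
  + NN c * ({pt (1+c) s} : Set R2).indicator 1 y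
  + (NN c - 4) * ({pt (1-c) (-s)} : Set R2).indicator 1 y
  + (1:ℝ) * ({pt (2+c) s} : Set R2).indicator 1 y
  + (1:ℝ) * ({pt (2-c) (-s)} : Set R2).indicator 1 y
  + (NN c - 4) * ({pt (3+c) s} : Set R2).indicator 1 y
  + NN c * ({pt (3-c) (-s)} : Set R2).indicator 1 y

open Classical in
lemma ind_eval (p y : R2) : ({p} : Set R2).indicator (1 : R2 → ℝ) y = if y = p then 1 else 0 := by
  rw [Set.indicator_apply]; simp only [Set.mem_singleton_iff, Pi.one_apply]

lemma sqrt_eq_one {a b : ℝ} (h : a^2 + b^2 = 1) : Real.sqrt (a^2+b^2) = 1 := by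
  rw [h, Real.sqrt_one]
lemma sqrt_eq_NN {a b c : ℝ} (h : a^2 + b^2 = 2 - 2*c) : Real.sqrt (a^2+b^2) = NN c := by
  rw [h]; rfl
lemma norm_le_three {a b : ℝ} (h : a^2 + b^2 ≤ 9) : Real.sqrt (a^2+b^2) ≤ 3 := by
  rw [show (3:ℝ) = Real.sqrt 9 by rw [show (9:ℝ) = 3^2 by norm_num, Real.sqrt_sq (by norm_num)]]
  exact Real.sqrt_le_sqrt h

lemma fv_evals (c s : ℝ) (hs : 0 < s) :
    fv c s (pt 1 0) = NN c - 3 ∧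
    fv c s (pt 2 0) = 0 ∧
    fv c s (pt 3 0) = NN c - 3 ∧
    fv c s (pt (1+c) s) = NN c ∧
    fv c s (pt (1-c) (-s)) = NN c - 4 ∧
    fv c s (pt (2+c) s) = 1 ∧
    fv c s (pt (2-c) (-s)) = 1 ∧
    fv c s (pt (3+c) s) = NN c - 4 ∧
    fv c s (pt (3-c) (-s)) = NN c := by
  have Ex1 : fv c s (pt 1 0) = NN c - 3 := by
    simp only [fv, ind_eval]
    rw [if_pos trivial, if_neg (pt_ne_fst (by intro h; linarith)), if_neg (pt_ne_snd (by intro h; linarith)), if_neg (pt_ne_snd (by intro h; linarith)), if_neg (pt_ne_snd (by intro h; linarith)), if_neg (pt_ne_snd (by intro h; linarith)), if_neg (pt_ne_snd (by intro h; linarith)), if_neg (pt_ne_snd (by intro h; linarith))]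
    ring
  have Ex2 : fv c s (pt 2 0) = 0 := by
    simp only [fv, ind_eval]
    rw [if_neg (pt_ne_fst (by intro h; linarith)), if_neg (pt_ne_fst (by intro h; linarith)), if_neg (pt_ne_snd (by intro h; linarith)), if_neg (pt_ne_snd (by intro h; linarith)), if_neg (pt_ne_snd (by intro h; linarith)), if_neg (pt_ne_snd (by intro h; linarith)), if_neg (pt_ne_snd (by intro h; linarith)), if_neg (pt_ne_snd (by intro h; linarith))]
    ring
  have Ex3 : fv c s (pt 3 0) = NN c - 3 := by
    simp only [fv, ind_eval]
    rw [if_neg (pt_ne_fst (by intro h; linarith)), if_pos trivial, if_neg (pt_ne_snd (by intro h; linarith)), if_neg (pt_ne_snd (by intro h; linarith)), if_neg (pt_ne_snd (by intro h; linarith)), if_neg (pt_ne_snd (by intro h; linarith)), if_neg (pt_ne_snd (by intro h; linarith)), if_neg (pt_ne_snd (by intro h; linarith))]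
    ring
  have Ey1p : fv c s (pt (1+c) s) = NN c := by
    simp only [fv, ind_eval]
    rw [if_neg (pt_ne_snd (by intro h; linarith)), if_neg (pt_ne_snd (by intro h; linarith)), if_pos trivial, if_neg (pt_ne_snd (by intro h; linarith)), if_neg (pt_ne_fst (by intro h; linarith)), if_neg (pt_ne_snd (by intro h; linarith)), if_neg (pt_ne_fst (by intro h; linarith)), if_neg (pt_ne_snd (by intro h; linarith))]
    ring
  have Ey1m : fv c s (pt (1-c) (-s)) = NN c - 4 := by
    simp only [fv, ind_eval]
    rw [if_neg (pt_ne_snd (by intro h; linarith)), if_neg (pt_ne_snd (by intro h; linarith)), if_neg (pt_ne_snd (by intro h; linarith)), if_pos trivial, if_neg (pt_ne_snd (by intro h; linarith)), if_neg (pt_ne_fst (by intro h; linarith)), if_neg (pt_ne_snd (by intro h; linarith)), if_neg (pt_ne_fst (by intro h; linarith))]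
    ring
  have Ey2p : fv c s (pt (2+c) s) = 1 := by
    simp only [fv, ind_eval]
    rw [if_neg (pt_ne_snd (by intro h; linarith)), if_neg (pt_ne_snd (by intro h; linarith)), if_neg (pt_ne_fst (by intro h; linarith)), if_neg (pt_ne_snd (by intro h; linarith)), if_pos trivial, if_neg (pt_ne_snd (by intro h; linarith)), if_neg (pt_ne_fst (by intro h; linarith)), if_neg (pt_ne_snd (by intro h; linarith))]
    ring
  have Ey2m : fv c s (pt (2-c) (-s)) = 1 := by
    simp only [fv, ind_eval]
    rw [if_neg (pt_ne_snd (by intro h; linarith)), if_neg (pt_ne_snd (by intro h; linarith)), if_neg (pt_ne_snd (by intro h; linarith)), if_neg (pt_ne_fst (by intro h; linarith)), if_neg (pt_ne_snd (by intro h; linarith)), if_pos trivial, if_neg (pt_ne_snd (by intro h; linarith)), if_neg (pt_ne_fst (by intro h; linarith))]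
    ring
  have Ey3p : fv c s (pt (3+c) s) = NN c - 4 := by
    simp only [fv, ind_eval]
    rw [if_neg (pt_ne_snd (by intro h; linarith)), if_neg (pt_ne_snd (by intro h; linarith)), if_neg (pt_ne_fst (by intro h; linarith)), if_neg (pt_ne_snd (by intro h; linarith)), if_neg (pt_ne_fst (by intro h; linarith)), if_neg (pt_ne_snd (by intro h; linarith)), if_pos trivial, if_neg (pt_ne_snd (by intro h; linarith))]
    ring
  have Ey3m : fv c s (pt (3-c) (-s)) = NN c := by
    simp only [fv, ind_eval]
    rw [if_neg (pt_ne_snd (by intro h; linarith)), if_neg (pt_ne_snd (by intro h; linarith)), if_neg (pt_ne_snd (by intro h; linarith)), if_neg (pt_ne_fst (by intro h; linarith)), if_neg (pt_ne_snd (by intro h; linarith)), if_neg (pt_ne_fst (by intro h; linarith)), if_neg (pt_ne_snd (by intro h; linarith)), if_pos trivial]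
    ring
  exact ⟨Ex1, Ex2, Ex3, Ey1p, Ey1m, Ey2p, Ey2m, Ey3p, Ey3m⟩

lemma key_ineq (c s : ℝ) (hs : 0 < s) (hc : 0 ≤ c) (hcs : c^2 + s^2 = 1)
    (x y : R2)
    (hx : x = pt 1 0 ∨ x = pt 2 0 ∨ x = pt 3 0)
    (hy : y = pt 1 0 + pt c s ∨ y = pt 1 0 - pt c s ∨ y = pt 2 0 + pt c s ∨
          y = pt 2 0 - pt c s ∨ y = pt 3 0 + pt c s ∨ y = pt 3 0 - pt c s) :
    fv c s y - fv c s x - (PP c * ψ (x 0) * (y 0 - x 0) + QQ c s * ψ (x 0) * (y 1 - x 1))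
      ≤ ‖x - y‖ ∧ ‖x - y‖ ≤ 3 := by
  have hc1 : c ≤ 1 := by nlinarith [sq_nonneg s]
  have hN0 : 0 ≤ NN c := Real.sqrt_nonneg _
  have hN2 : NN c ^ 2 = 2 - 2*c := Real.sq_sqrt (by linarith)
  have hN32 : NN c ≤ 3/2 := by nlinarith
  have hPP : PP c = 6 - 2 * NN c := rfl
  have hQs : QQ c s * s = 2 - PP c * c := by
    rw [QQ]; field_simp
  have sqrt_nonneg' : (0:ℝ) ≤ 0 := le_refl 0
  have Eps1 : ψ 1 = 1 := by norm_num [ψ]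
  have Eps2 : ψ 2 = 0 := by norm_num [ψ]
  have Eps3 : ψ 3 = -1 := by norm_num [ψ]
  obtain ⟨Ex1, Ex2, Ex3, Ey1p, Ey1m, Ey2p, Ey2m, Ey3p, Ey3m⟩ := fv_evals c s hs
  rcases hx with rfl | rfl | rfl <;> rcases hy with rfl | rfl | rfl | rfl | rfl | rfl
  · simp only [pt_add, pt_sub, _root_.zero_add, _root_.add_zero, _root_.zero_sub, _root_.sub_zero, norm_pt,
      pt_apply0, pt_apply1, Ex1, Ex2, Ex3, Ey1p, Ey1m, Ey2p, Ey2m, Ey3p, Ey3m,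
      Eps1, Eps2, Eps3, mul_zero, zero_mul]
    refine ⟨?_, norm_le_three (by nlinarith [hcs, hc, hc1])⟩
    rw [sqrt_eq_one (by linear_combination hcs)]
    all_goals linarith [hQs, hPP, hN32, hN0]
  · simp only [pt_add, pt_sub, _root_.zero_add, _root_.add_zero, _root_.zero_sub, _root_.sub_zero, norm_pt,
      pt_apply0, pt_apply1, Ex1, Ex2, Ex3, Ey1p, Ey1m, Ey2p, Ey2m, Ey3p, Ey3m,
      Eps1, Eps2, Eps3, mul_zero, zero_mul]
    refine ⟨?_, norm_le_three (by nlinarith [hcs, hc, hc1])⟩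
    rw [sqrt_eq_one (by linear_combination hcs)]
    all_goals linarith [hQs, hPP, hN32, hN0]
  · simp only [pt_add, pt_sub, _root_.zero_add, _root_.add_zero, _root_.zero_sub, _root_.sub_zero, norm_pt,
      pt_apply0, pt_apply1, Ex1, Ex2, Ex3, Ey1p, Ey1m, Ey2p, Ey2m, Ey3p, Ey3m,
      Eps1, Eps2, Eps3, mul_zero, zero_mul]
    refine ⟨?_, norm_le_three (by nlinarith [hcs, hc, hc1])⟩
    refine le_trans (b := 0) ?_ (Real.sqrt_nonneg _)
    all_goals linarith [hQs, hPP, hN32, hN0]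
  · simp only [pt_add, pt_sub, _root_.zero_add, _root_.add_zero, _root_.zero_sub, _root_.sub_zero, norm_pt,
      pt_apply0, pt_apply1, Ex1, Ex2, Ex3, Ey1p, Ey1m, Ey2p, Ey2m, Ey3p, Ey3m,
      Eps1, Eps2, Eps3, mul_zero, zero_mul]
    refine ⟨?_, norm_le_three (by nlinarith [hcs, hc, hc1])⟩
    rw [sqrt_eq_NN (by linear_combination hcs)]
    all_goals linarith [hQs, hPP, hN32, hN0]
  · simp only [pt_add, pt_sub, _root_.zero_add, _root_.add_zero, _root_.zero_sub, _root_.sub_zero, norm_pt,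
      pt_apply0, pt_apply1, Ex1, Ex2, Ex3, Ey1p, Ey1m, Ey2p, Ey2m, Ey3p, Ey3m,
      Eps1, Eps2, Eps3, mul_zero, zero_mul]
    refine ⟨?_, norm_le_three (by nlinarith [hcs, hc, hc1])⟩
    refine le_trans (b := 0) ?_ (Real.sqrt_nonneg _)
    all_goals linarith [hQs, hPP, hN32, hN0]
  · simp only [pt_add, pt_sub, _root_.zero_add, _root_.add_zero, _root_.zero_sub, _root_.sub_zero, norm_pt,
      pt_apply0, pt_apply1, Ex1, Ex2, Ex3, Ey1p, Ey1m, Ey2p, Ey2m, Ey3p, Ey3m,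
      Eps1, Eps2, Eps3, mul_zero, zero_mul]
    refine ⟨?_, norm_le_three (by nlinarith [hcs, hc, hc1])⟩
    refine le_trans (b := 0) ?_ (Real.sqrt_nonneg _)
    all_goals linarith [hQs, hPP, hN32, hN0]
  · simp only [pt_add, pt_sub, _root_.zero_add, _root_.add_zero, _root_.zero_sub, _root_.sub_zero, norm_pt,
      pt_apply0, pt_apply1, Ex1, Ex2, Ex3, Ey1p, Ey1m, Ey2p, Ey2m, Ey3p, Ey3m,
      Eps1, Eps2, Eps3, mul_zero, zero_mul]
    refine ⟨?_, norm_le_three (by nlinarith [hcs, hc, hc1])⟩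
    rw [sqrt_eq_NN (by linear_combination hcs)]
    all_goals linarith [hQs, hPP, hN32, hN0]
  · simp only [pt_add, pt_sub, _root_.zero_add, _root_.add_zero, _root_.zero_sub, _root_.sub_zero, norm_pt,
      pt_apply0, pt_apply1, Ex1, Ex2, Ex3, Ey1p, Ey1m, Ey2p, Ey2m, Ey3p, Ey3m,
      Eps1, Eps2, Eps3, mul_zero, zero_mul]
    refine ⟨?_, norm_le_three (by nlinarith [hcs, hc, hc1])⟩
    refine le_trans (b := 0) ?_ (Real.sqrt_nonneg _)
    all_goals linarith [hQs, hPP, hN32, hN0]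
  · simp only [pt_add, pt_sub, _root_.zero_add, _root_.add_zero, _root_.zero_sub, _root_.sub_zero, norm_pt,
      pt_apply0, pt_apply1, Ex1, Ex2, Ex3, Ey1p, Ey1m, Ey2p, Ey2m, Ey3p, Ey3m,
      Eps1, Eps2, Eps3, mul_zero, zero_mul]
    refine ⟨?_, norm_le_three (by nlinarith [hcs, hc, hc1])⟩
    rw [sqrt_eq_one (by linear_combination hcs)]
    all_goals linarith [hQs, hPP, hN32, hN0]
  · simp only [pt_add, pt_sub, _root_.zero_add, _root_.add_zero, _root_.zero_sub, _root_.sub_zero, norm_pt,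
      pt_apply0, pt_apply1, Ex1, Ex2, Ex3, Ey1p, Ey1m, Ey2p, Ey2m, Ey3p, Ey3m,
      Eps1, Eps2, Eps3, mul_zero, zero_mul]
    refine ⟨?_, norm_le_three (by nlinarith [hcs, hc, hc1])⟩
    rw [sqrt_eq_one (by linear_combination hcs)]
    all_goals linarith [hQs, hPP, hN32, hN0]
  · simp only [pt_add, pt_sub, _root_.zero_add, _root_.add_zero, _root_.zero_sub, _root_.sub_zero, norm_pt,
      pt_apply0, pt_apply1, Ex1, Ex2, Ex3, Ey1p, Ey1m, Ey2p, Ey2m, Ey3p, Ey3m,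
      Eps1, Eps2, Eps3, mul_zero, zero_mul]
    refine ⟨?_, norm_le_three (by nlinarith [hcs, hc, hc1])⟩
    refine le_trans (b := 0) ?_ (Real.sqrt_nonneg _)
    all_goals linarith [hQs, hPP, hN32, hN0]
  · simp only [pt_add, pt_sub, _root_.zero_add, _root_.add_zero, _root_.zero_sub, _root_.sub_zero, norm_pt,
      pt_apply0, pt_apply1, Ex1, Ex2, Ex3, Ey1p, Ey1m, Ey2p, Ey2m, Ey3p, Ey3m,
      Eps1, Eps2, Eps3, mul_zero, zero_mul]
    refine ⟨?_, norm_le_three (by nlinarith [hcs, hc, hc1])⟩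
    rw [sqrt_eq_NN (by linear_combination hcs)]
    all_goals linarith [hQs, hPP, hN32, hN0]
  · simp only [pt_add, pt_sub, _root_.zero_add, _root_.add_zero, _root_.zero_sub, _root_.sub_zero, norm_pt,
      pt_apply0, pt_apply1, Ex1, Ex2, Ex3, Ey1p, Ey1m, Ey2p, Ey2m, Ey3p, Ey3m,
      Eps1, Eps2, Eps3, mul_zero, zero_mul]
    refine ⟨?_, norm_le_three (by nlinarith [hcs, hc, hc1])⟩
    refine le_trans (b := 0) ?_ (Real.sqrt_nonneg _)
    all_goals linarith [hQs, hPP, hN32, hN0]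
  · simp only [pt_add, pt_sub, _root_.zero_add, _root_.add_zero, _root_.zero_sub, _root_.sub_zero, norm_pt,
      pt_apply0, pt_apply1, Ex1, Ex2, Ex3, Ey1p, Ey1m, Ey2p, Ey2m, Ey3p, Ey3m,
      Eps1, Eps2, Eps3, mul_zero, zero_mul]
    refine ⟨?_, norm_le_three (by nlinarith [hcs, hc, hc1])⟩
    refine le_trans (b := 0) ?_ (Real.sqrt_nonneg _)
    all_goals linarith [hQs, hPP, hN32, hN0]
  · simp only [pt_add, pt_sub, _root_.zero_add, _root_.add_zero, _root_.zero_sub, _root_.sub_zero, norm_pt,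
      pt_apply0, pt_apply1, Ex1, Ex2, Ex3, Ey1p, Ey1m, Ey2p, Ey2m, Ey3p, Ey3m,
      Eps1, Eps2, Eps3, mul_zero, zero_mul]
    refine ⟨?_, norm_le_three (by nlinarith [hcs, hc, hc1])⟩
    rw [sqrt_eq_NN (by linear_combination hcs)]
    all_goals linarith [hQs, hPP, hN32, hN0]
  · simp only [pt_add, pt_sub, _root_.zero_add, _root_.add_zero, _root_.zero_sub, _root_.sub_zero, norm_pt,
      pt_apply0, pt_apply1, Ex1, Ex2, Ex3, Ey1p, Ey1m, Ey2p, Ey2m, Ey3p, Ey3m,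
      Eps1, Eps2, Eps3, mul_zero, zero_mul]
    refine ⟨?_, norm_le_three (by nlinarith [hcs, hc, hc1])⟩
    refine le_trans (b := 0) ?_ (Real.sqrt_nonneg _)
    all_goals linarith [hQs, hPP, hN32, hN0]
  · simp only [pt_add, pt_sub, _root_.zero_add, _root_.add_zero, _root_.zero_sub, _root_.sub_zero, norm_pt,
      pt_apply0, pt_apply1, Ex1, Ex2, Ex3, Ey1p, Ey1m, Ey2p, Ey2m, Ey3p, Ey3m,
      Eps1, Eps2, Eps3, mul_zero, zero_mul]
    refine ⟨?_, norm_le_three (by nlinarith [hcs, hc, hc1])⟩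
    rw [sqrt_eq_one (by linear_combination hcs)]
    all_goals linarith [hQs, hPP, hN32, hN0]
  · simp only [pt_add, pt_sub, _root_.zero_add, _root_.add_zero, _root_.zero_sub, _root_.sub_zero, norm_pt,
      pt_apply0, pt_apply1, Ex1, Ex2, Ex3, Ey1p, Ey1m, Ey2p, Ey2m, Ey3p, Ey3m,
      Eps1, Eps2, Eps3, mul_zero, zero_mul]
    refine ⟨?_, norm_le_three (by nlinarith [hcs, hc, hc1])⟩
    rw [sqrt_eq_one (by linear_combination hcs)]
    all_goals linarith [hQs, hPP, hN32, hN0]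

def pi0 (θ : ℝ) : Measure (R2 × R2) := (6:ℝ≥0∞)⁻¹ •
    (Measure.dirac (pt 1 0, pt 1 0 + dir θ) + Measure.dirac (pt 1 0, pt 1 0 - dir θ) +
     Measure.dirac (pt 2 0, pt 2 0 + dir θ) + Measure.dirac (pt 2 0, pt 2 0 - dir θ) +
     Measure.dirac (pt 3 0, pt 3 0 + dir θ) + Measure.dirac (pt 3 0, pt 3 0 - dir θ))

lemma pi0_mart (θ : ℝ) :
    IsMartCoupling (muM 3) ((muM 3).bind (Pker θ)) (pi0 θ) := by
  refine ⟨⟨⟨?_⟩, ?_, ?_⟩, ?_⟩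
  · show pi0 θ Set.univ = 1
    simp only [pi0, Measure.smul_apply, Measure.add_apply, measure_univ, smul_eq_mul]
    rw [show (1+1+1+1+1+1 : ℝ≥0∞) = 6 by norm_num, ENNReal.inv_mul_cancel (by norm_num) (by norm_num)]
  · rw [pi0, Measure.map_smul, Measure.map_add _ _ measurable_fst,
      Measure.map_add _ _ measurable_fst, Measure.map_add _ _ measurable_fst,
      Measure.map_add _ _ measurable_fst, Measure.map_add _ _ measurable_fst,
      Measure.map_dirac' measurable_fst, Measure.map_dirac' measurable_fst,
      Measure.map_dirac' measurable_fst, Measure.map_dirac' measurable_fst,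
      Measure.map_dirac' measurable_fst, Measure.map_dirac' measurable_fst, mu3_eq]
    have key : ∀ a b c : ℝ≥0∞, 6⁻¹*(a+a+b+b+c+c) = 3⁻¹*(a+b+c) := by
      intro a b c
      rw [show a+a+b+b+c+c = 2*(a+b+c) by ring, h63, mul_assoc 3⁻¹, ← mul_assoc 2⁻¹,
        ENNReal.inv_mul_cancel (by norm_num) (by norm_num), one_mul]
    ext s hs
    simp only [Measure.smul_apply, Measure.add_apply, smul_eq_mul]
    exact key _ _ _
  · rw [pi0, Measure.map_smul, Measure.map_add _ _ measurable_snd,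
      Measure.map_add _ _ measurable_snd, Measure.map_add _ _ measurable_snd,
      Measure.map_add _ _ measurable_snd, Measure.map_add _ _ measurable_snd,
      Measure.map_dirac' measurable_snd, Measure.map_dirac' measurable_snd,
      Measure.map_dirac' measurable_snd, Measure.map_dirac' measurable_snd,
      Measure.map_dirac' measurable_snd, Measure.map_dirac' measurable_snd, nu3_eq]
  · intro φ
    have hsm : StronglyMeasurable (fun p : R2 × R2 => φ p.1 • (p.2 - p.1)) :=
      ((φ.continuous.comp continuous_fst).smul (continuous_snd.sub continuous_fst)).stronglyMeasurable
    rw [pi0, integral_six _ hsm]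
    have e1 : ∀ x d : R2, x + d - x = d := fun x d => by abel
    have e2 : ∀ x d : R2, x - d - x = -d := fun x d => by abel
    simp only [e1, e2, smul_neg]
    rw [show ∀ a b c : R2, a + -a + b + -b + c + -c = 0 from fun a b c => by abel]
    simp

lemma pi0_cost (θ : ℝ) (h1 : ‖dir θ‖ = 1) :
    ∫ p, ‖p.1 - p.2‖ ∂(pi0 θ) = 1 := by
  have hsm : StronglyMeasurable (fun p : R2 × R2 => ‖p.1 - p.2‖) :=
    (continuous_fst.sub continuous_snd).norm.stronglyMeasurable
  rw [pi0, integral_six _ hsm]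
  have e1 : ∀ x d : R2, x - (x + d) = -d := fun x d => by abel
  have e2 : ∀ x d : R2, x - (x - d) = d := fun x d => by abel
  simp only [e1, e2, norm_neg, h1]
  norm_num

lemma norm_coords (z : R2) : ‖z‖ = Real.sqrt ((z 0)^2 + (z 1)^2) := by
  conv_lhs => rw [← pt_eta z]
  rw [norm_pt]

lemma abs_coord0 (z : R2) : |z 0| ≤ ‖z‖ := by
  rw [norm_coords, ← Real.sqrt_sq_eq_abs]
  exact Real.sqrt_le_sqrt (by nlinarith [sq_nonneg (z 1)])

lemma abs_coord1 (z : R2) : |z 1| ≤ ‖z‖ := by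
  rw [norm_coords, ← Real.sqrt_sq_eq_abs]
  exact Real.sqrt_le_sqrt (by nlinarith [sq_nonneg (z 0)])

lemma sub_apply0 (z w : R2) : (z - w) 0 = z 0 - w 0 := rfl
lemma sub_apply1 (z w : R2) : (z - w) 1 = z 1 - w 1 := rfl

lemma psi_abs (u : ℝ) : |ψ u| ≤ 1 :=
  abs_le.2 ⟨le_max_left _ _, max_le (by norm_num) (min_le_left _ _)⟩

lemma psi_cont : Continuous ψ :=
  continuous_const.max (continuous_const.min (continuous_const.sub continuous_id))

lemma cont0 : Continuous fun x : R2 => x 0 := (EuclideanSpace.proj (0 : Fin 2)).continuous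
lemma cont1 : Continuous fun x : R2 => x 1 := (EuclideanSpace.proj (1 : Fin 2)).continuous

lemma fv_meas (c s : ℝ) : Measurable (fv c s) := by
  unfold fv
  refine (((((((Measurable.const_mul ?_ _).add (Measurable.const_mul ?_ _)).add
    (Measurable.const_mul ?_ _)).add (Measurable.const_mul ?_ _)).add
    (Measurable.const_mul ?_ _)).add (Measurable.const_mul ?_ _)).add
    (Measurable.const_mul ?_ _)).add (Measurable.const_mul ?_ _) <;>
  exact measurable_one.indicator (measurableSet_singleton _)

lemma fv_abs (c s : ℝ) (hc : 0 ≤ c) (hc1 : c ≤ 1) (y : R2) : |fv c s y| ≤ 20 := by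
  have hN0 : 0 ≤ NN c := Real.sqrt_nonneg _
  have hN2 : NN c ^ 2 = 2 - 2*c := Real.sq_sqrt (by linarith)
  have hN32 : NN c ≤ 3/2 := by nlinarith
  have hind : ∀ (C : ℝ) (p z : R2), |C * ({p} : Set R2).indicator 1 z| ≤ |C| := by
    intro C p z; rw [ind_eval]; split_ifs <;> simp
  have habs : ∀ C D : ℝ, |C| ≤ D → -D ≤ C ∧ C ≤ D := fun C D h => abs_le.1 h
  obtain ⟨a1, b1⟩ := habs _ _ ((hind (NN c - 3) (pt 1 0) y).trans (abs_le.2 ⟨by linarith, by linarith⟩ : |NN c - 3| ≤ 3))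
  obtain ⟨a2, b2⟩ := habs _ _ ((hind (NN c - 3) (pt 3 0) y).trans (abs_le.2 ⟨by linarith, by linarith⟩ : |NN c - 3| ≤ 3))
  obtain ⟨a3, b3⟩ := habs _ _ ((hind (NN c) (pt (1+c) s) y).trans (abs_le.2 ⟨by linarith, by linarith⟩ : |NN c| ≤ 2))
  obtain ⟨a4, b4⟩ := habs _ _ ((hind (NN c - 4) (pt (1-c) (-s)) y).trans (abs_le.2 ⟨by linarith, by linarith⟩ : |NN c - 4| ≤ 4))
  obtain ⟨a5, b5⟩ := habs _ _ ((hind (1:ℝ) (pt (2+c) s) y).trans (by norm_num : |(1:ℝ)| ≤ 1))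
  obtain ⟨a6, b6⟩ := habs _ _ ((hind (1:ℝ) (pt (2-c) (-s)) y).trans (by norm_num : |(1:ℝ)| ≤ 1))
  obtain ⟨a7, b7⟩ := habs _ _ ((hind (NN c - 4) (pt (3+c) s) y).trans (abs_le.2 ⟨by linarith, by linarith⟩ : |NN c - 4| ≤ 4))
  obtain ⟨a8, b8⟩ := habs _ _ ((hind (NN c) (pt (3-c) (-s)) y).trans (abs_le.2 ⟨by linarith, by linarith⟩ : |NN c| ≤ 2))
  rw [abs_le]
  unfold fv
  exact ⟨by linarith, by linarith⟩

lemma lower (θ : ℝ) (hs : 0 < Real.sin θ) (hc : 0 ≤ Real.cos θ)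
    (π : Measure (R2 × R2))
    (hπ : IsMartCoupling (muM 3) ((muM 3).bind (Pker θ)) π) :
    1 ≤ ∫ p, ‖p.1 - p.2‖ ∂π := by
  set c := Real.cos θ with hcdef
  set s := Real.sin θ with hsdef
  have hcs : c^2 + s^2 = 1 := by rw [hcdef, hsdef]; exact Real.cos_sq_add_sin_sq θ
  have hc1 : c ≤ 1 := by nlinarith [sq_nonneg s]
  have hdir : dir θ = pt c s := rfl
  obtain ⟨⟨hprob, hfst, hsnd⟩, hmart⟩ := hπ
  haveI : IsProbabilityMeasure π := hprob
  obtain ⟨E1, E2, E3, E4, E5, E6, E7, E8, E9⟩ := fv_evals c s hs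
  -- support sets
  set SX : Set R2 := {pt 1 0, pt 2 0, pt 3 0} with hSX
  set SY : Set R2 := {pt 1 0 + pt c s, pt 1 0 - pt c s, pt 2 0 + pt c s,
    pt 2 0 - pt c s, pt 3 0 + pt c s, pt 3 0 - pt c s} with hSY
  have hSXm : MeasurableSet SX := (Set.toFinite _).measurableSet
  have hSYm : MeasurableSet SY := (Set.toFinite _).measurableSet
  have hdiracX : ∀ p : R2, p ∈ SX → Measure.dirac p SXᶜ = 0 := by
    intro p hp
    rw [Measure.dirac_apply' _ hSXm.compl, Set.indicator_of_notMem (by simpa using hp)]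
  have hdiracY : ∀ p : R2, p ∈ SY → Measure.dirac p SYᶜ = 0 := by
    intro p hp
    rw [Measure.dirac_apply' _ hSYm.compl, Set.indicator_of_notMem (by simpa using hp)]
  have hμX : muM 3 SXᶜ = 0 := by
    rw [mu3_eq]
    simp only [Measure.smul_apply, Measure.add_apply, smul_eq_mul]
    rw [hdiracX _ (by simp [hSX]), hdiracX _ (by simp [hSX]), hdiracX _ (by simp [hSX])]
    simp
  have hνY : ((muM 3).bind (Pker θ)) SYᶜ = 0 := by
    rw [nu3_eq θ, hdir]
    simp only [Measure.smul_apply, Measure.add_apply, smul_eq_mul]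
    rw [hdiracY _ (by simp [hSY]), hdiracY _ (by simp [hSY]), hdiracY _ (by simp [hSY]),
      hdiracY _ (by simp [hSY]), hdiracY _ (by simp [hSY]), hdiracY _ (by simp [hSY])]
    simp
  have hXae : ∀ᵐ p ∂π, p.1 ∈ SX := by
    have h1 : ∀ᵐ x ∂(muM 3), x ∈ SX := ae_iff.mpr (by simpa [Set.compl_def] using hμX)
    rw [← hfst] at h1
    exact (ae_map_iff measurable_fst.aemeasurable hSXm).1 h1
  have hYae : ∀ᵐ p ∂π, p.2 ∈ SY := by
    have h1 : ∀ᵐ x ∂((muM 3).bind (Pker θ)), x ∈ SY := ae_iff.mpr (by simpa [Set.compl_def] using hνY)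
    rw [← hsnd] at h1
    exact (ae_map_iff measurable_snd.aemeasurable hSYm).1 h1
  have hae : ∀ᵐ p ∂π, (fv c s p.2 - fv c s p.1 -
      (PP c * ψ (p.1 0) * (p.2 0 - p.1 0) + QQ c s * ψ (p.1 0) * (p.2 1 - p.1 1))
        ≤ ‖p.1 - p.2‖ ∧ ‖p.1 - p.2‖ ≤ 3) := by
    filter_upwards [hXae, hYae] with p hx hy
    exact key_ineq c s hs hc hcs p.1 p.2 (by simpa [hSX] using hx) (by simpa [hSY] using hy)
  have haeb : ∀ᵐ p ∂π, ‖p.1 - p.2‖ ≤ 3 := hae.mono fun p hp => hp.2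
  -- bounded continuous test functions
  set Φ1 : R2 →ᵇ ℝ := BoundedContinuousFunction.ofNormedAddCommGroup
    (fun x => PP c * ψ (x 0)) (continuous_const.mul (psi_cont.comp cont0)) (|PP c|)
    (fun x => by
      rw [Real.norm_eq_abs, abs_mul]
      calc |PP c| * |ψ (x 0)| ≤ |PP c| * 1 := by
            exact mul_le_mul_of_nonneg_left (psi_abs _) (abs_nonneg _)
        _ = |PP c| := mul_one _) with hΦ1
  set Φ2 : R2 →ᵇ ℝ := BoundedContinuousFunction.ofNormedAddCommGroup
    (fun x => QQ c s * ψ (x 0)) (continuous_const.mul (psi_cont.comp cont0)) (|QQ c s|)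
    (fun x => by
      rw [Real.norm_eq_abs, abs_mul]
      calc |QQ c s| * |ψ (x 0)| ≤ |QQ c s| * 1 := by
            exact mul_le_mul_of_nonneg_left (psi_abs _) (abs_nonneg _)
        _ = |QQ c s| := mul_one _) with hΦ2
  have hΦ1app : ∀ x : R2, Φ1 x = PP c * ψ (x 0) := fun x => rfl
  have hΦ2app : ∀ x : R2, Φ2 x = QQ c s * ψ (x 0) := fun x => rfl
  -- martingale conditions in coordinates
  have hmartc : ∀ (Φ : R2 →ᵇ ℝ) (i : Fin 2),
      ∫ p, Φ p.1 * (p.2 i - p.1 i) ∂π = 0 := by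
    intro Φ i
    have hFint : Integrable (fun p : R2 × R2 => Φ p.1 • (p.2 - p.1)) π := by
      refine Integrable.mono' (integrable_const (‖Φ‖ * 3))
        (((Φ.continuous.comp continuous_fst).smul
          (continuous_snd.sub continuous_fst)).aestronglyMeasurable) ?_
      filter_upwards [haeb] with p hp
      rw [norm_smul, Real.norm_eq_abs]
      have h1 : |Φ p.1| ≤ ‖Φ‖ := by
        rw [← Real.norm_eq_abs]; exact Φ.norm_coe_le_norm p.1
      have h2 : ‖p.2 - p.1‖ ≤ 3 := by rwa [norm_sub_rev]
      exact mul_le_mul h1 h2 (norm_nonneg _) (norm_nonneg _)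
    have h := (EuclideanSpace.proj (i : Fin 2)).integral_comp_comm hFint
    rw [hmart Φ] at h
    have hproj : ∀ v : R2, (EuclideanSpace.proj i) v = v i := fun v => rfl
    have hsub : ∀ p : R2 × R2, (p.2 - p.1) i = p.2 i - p.1 i := fun p => rfl
    simp only [_root_.map_smul, smul_eq_mul, hproj, hsub, map_zero] at h
    exact h
  -- integrability of pieces
  have hfsm := (fv_meas c s).stronglyMeasurable
  have int_fv_snd : Integrable (fun p : R2 × R2 => fv c s p.2) π := by
    refine Integrable.mono' (integrable_const 20)
      ((fv_meas c s).comp measurable_snd).aestronglyMeasurable ?_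
    exact Eventually.of_forall fun p => by
      rw [Real.norm_eq_abs]; exact fv_abs c s hc hc1 _
  have int_fv_fst : Integrable (fun p : R2 × R2 => fv c s p.1) π := by
    refine Integrable.mono' (integrable_const 20)
      ((fv_meas c s).comp measurable_fst).aestronglyMeasurable ?_
    exact Eventually.of_forall fun p => by
      rw [Real.norm_eq_abs]; exact fv_abs c s hc hc1 _
  have int_t : ∀ (Φ : R2 →ᵇ ℝ) (i : Fin 2),
      Integrable (fun p : R2 × R2 => Φ p.1 * (p.2 i - p.1 i)) π := by
    intro Φ i
    refine Integrable.mono' (integrable_const (‖Φ‖ * 3))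
      (((Φ.continuous.comp continuous_fst).mul
        (((EuclideanSpace.proj i).continuous.comp continuous_snd).sub
          ((EuclideanSpace.proj i).continuous.comp continuous_fst))).aestronglyMeasurable) ?_
    filter_upwards [haeb] with p hp
    rw [Real.norm_eq_abs, abs_mul]
    have h1 : |Φ p.1| ≤ ‖Φ‖ := by rw [← Real.norm_eq_abs]; exact Φ.norm_coe_le_norm p.1
    have h2 : |p.2 i - p.1 i| ≤ 3 := by
      have h3 : |(p.2 - p.1) i| ≤ ‖p.2 - p.1‖ := by
        fin_cases i
        · exact abs_coord0 _
        · exact abs_coord1 _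
      have h4 : (p.2 - p.1) i = p.2 i - p.1 i := rfl
      rw [h4] at h3
      refine h3.trans ?_
      rwa [norm_sub_rev]
    exact mul_le_mul h1 h2 (abs_nonneg _) (norm_nonneg _)
  have hcost_int : Integrable (fun p : R2 × R2 => ‖p.1 - p.2‖) π := by
    refine Integrable.mono' (integrable_const 3)
      ((continuous_fst.sub continuous_snd).norm.aestronglyMeasurable) ?_
    filter_upwards [haeb] with p hp
    rwa [norm_norm]
  -- the integral of the dual function
  have hg_eq : ∫ p, (fv c s p.2 - fv c s p.1 -
      (Φ1 p.1 * (p.2 0 - p.1 0) + Φ2 p.1 * (p.2 1 - p.1 1))) ∂π = 1 := by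
    have I12 : Integrable (fun p : R2 × R2 => fv c s p.2 - fv c s p.1) π :=
      int_fv_snd.sub int_fv_fst
    have I34 : Integrable (fun p : R2 × R2 =>
        Φ1 p.1 * (p.2 0 - p.1 0) + Φ2 p.1 * (p.2 1 - p.1 1)) π :=
      (int_t Φ1 0).add (int_t Φ2 1)
    rw [integral_sub I12 I34, integral_sub int_fv_snd int_fv_fst,
      integral_add (int_t Φ1 0) (int_t Φ2 1), hmartc Φ1 0, hmartc Φ2 1]
    have hμint : ∫ p : R2 × R2, fv c s p.1 ∂π = (3:ℝ)⁻¹ • (fv c s (pt 1 0) + fv c s (pt 2 0) + fv c s (pt 3 0)) := by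
      rw [show ∫ p : R2 × R2, fv c s p.1 ∂π = ∫ x, fv c s x ∂(π.map Prod.fst) from
        (integral_map measurable_fst.aemeasurable hfsm.aestronglyMeasurable).symm,
        hfst, mu3_eq, integral_three _ hfsm]
    have hνint : ∫ p : R2 × R2, fv c s p.2 ∂π = (6:ℝ)⁻¹ •
        (fv c s (pt 1 0 + pt c s) + fv c s (pt 1 0 - pt c s) + fv c s (pt 2 0 + pt c s)
          + fv c s (pt 2 0 - pt c s) + fv c s (pt 3 0 + pt c s) + fv c s (pt 3 0 - pt c s)) := by
      rw [show ∫ p : R2 × R2, fv c s p.2 ∂π = ∫ x, fv c s x ∂(π.map Prod.snd) from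
        (integral_map measurable_snd.aemeasurable hfsm.aestronglyMeasurable).symm,
        hsnd, nu3_eq θ, hdir, integral_six _ hfsm]
    rw [hμint, hνint]
    have hadd : ∀ a b a' b' : ℝ, pt a b + pt a' b' = pt (a+a') (b+b') := by
      intro a b a' b'; ext i; fin_cases i <;> rfl
    have hsub' : ∀ a b a' b' : ℝ, pt a b - pt a' b' = pt (a-a') (b-b') := by
      intro a b a' b'; ext i; fin_cases i <;> rfl
    have e1 : pt 1 0 + pt c s = pt (1+c) s := by rw [hadd]; norm_num
    have e2 : pt 1 0 - pt c s = pt (1-c) (-s) := by rw [hsub']; norm_num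
    have e3 : pt 2 0 + pt c s = pt (2+c) s := by rw [hadd]; norm_num
    have e4 : pt 2 0 - pt c s = pt (2-c) (-s) := by rw [hsub']; norm_num
    have e5 : pt 3 0 + pt c s = pt (3+c) s := by rw [hadd]; norm_num
    have e6 : pt 3 0 - pt c s = pt (3-c) (-s) := by rw [hsub']; norm_num
    rw [e1, e2, e3, e4, e5, e6, E1, E2, E3, E4, E5, E6, E7, E8, E9]
    simp only [smul_eq_mul]
    ring
  have Iall : Integrable (fun p : R2 × R2 => fv c s p.2 - fv c s p.1 -
      (Φ1 p.1 * (p.2 0 - p.1 0) + Φ2 p.1 * (p.2 1 - p.1 1))) π :=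
    (int_fv_snd.sub int_fv_fst).sub ((int_t Φ1 0).add (int_t Φ2 1))
  have hg_le := integral_mono_ae Iall hcost_int
    (hae.mono fun p hp => by
      show fv c s p.2 - fv c s p.1 - (Φ1 p.1 * (p.2 0 - p.1 0) + Φ2 p.1 * (p.2 1 - p.1 1)) ≤ _
      rw [hΦ1app p.1, hΦ2app p.1]
      exact hp.1)
  rw [← hg_eq]
  exact hg_le

/-- `V^M_{c₁}(μ_3, ν_{3,n}) = 1` for every `n ≥ 1`. -/
theorem stmt13 (n : ℕ) (hn : 1 ≤ n) :
    MOTval (fun x y => ‖x - y‖) (muM 3) ((muM 3).bind (Pker (Real.pi / (2 * n)))) = 1 := by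
  set θ := Real.pi / (2 * (n:ℝ)) with hθ
  have hn' : (1:ℝ) ≤ (n:ℝ) := by exact_mod_cast hn
  have hθpos : 0 < θ := div_pos Real.pi_pos (by linarith)
  have hθle : θ ≤ Real.pi / 2 := by
    rw [hθ]
    apply div_le_div_of_nonneg_left Real.pi_pos.le two_pos ?_ |>.trans_eq rfl
    linarith
  have hs : 0 < Real.sin θ := Real.sin_pos_of_pos_of_lt_pi hθpos
    (lt_of_le_of_lt hθle (by linarith [Real.pi_pos]))
  have hc : 0 ≤ Real.cos θ := Real.cos_nonneg_of_mem_Icc ⟨by linarith, hθle⟩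
  have hd1 : ‖dir θ‖ = 1 := by
    rw [dir, norm_pt, show Real.cos θ^2 + Real.sin θ^2 = 1 from Real.cos_sq_add_sin_sq θ,
      Real.sqrt_one]
  rw [MOTval]
  apply le_antisymm
  · apply csInf_le
    · refine ⟨1, ?_⟩
      rintro r ⟨π', hπ', rfl⟩
      exact lower θ hs hc π' hπ'
    · exact ⟨pi0 θ, pi0_mart θ, pi0_cost θ hd1⟩
  · apply le_csInf
    · exact ⟨1, pi0 θ, pi0_mart θ, pi0_cost θ hd1⟩
    · rintro r ⟨π', hπ', rfl⟩
      exact lower θ hs hc π' hπ'
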